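/- arXiv:2310.16213 — 2 statements merged into one kernel-verified Lean document; each statement's English description precedes it below -/
import Mathlib

section
/- For every τ > 0, r ≥ 1 and z ∈ ℝ, the marginal density of z under the alternative equals the null density times a confluent hypergeometric factor: ∫_ℝ φ(z−λ) j(λ|τ²,r) dλ = φ(z) · (1+τ²)^{−(r+1/2)} · ₁F₁(r+1/2, 1/2; τ²z²/(2(1+τ²))). Equivalently, the two-sided z Bayes factor satisfies BF₁₀(z|τ²,r) = (1+τ²)^{−(r+1/2)} ₁F₁(r+1/2, 1/2; τ²z²/(2(1+τ²))). -/
open Real MeasureTheory Filter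

/-- Rising factorial (Pochhammer symbol) `(a)_k`. -/
noncomputable def risingFac (a : ℝ) (k : ℕ) : ℝ := (ascPochhammer ℝ k).eval a

/-- Confluent hypergeometric function `₁F₁(a, b; x)`. -/
noncomputable def oneF1 (a b x : ℝ) : ℝ :=
  ∑' k : ℕ, (risingFac a k / risingFac b k) * x ^ k / (Nat.factorial k : ℝ)

/-- Standard normal density. -/
noncomputable def stdNormalPdf (x : ℝ) : ℝ :=
  (Real.sqrt (2 * Real.pi))⁻¹ * Real.exp (-x ^ 2 / 2)

/-- Normal-moment density `j(λ | τ², r)` of order `r`. -/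
noncomputable def normalMomentPdf (τ r l : ℝ) : ℝ :=
  (l ^ 2) ^ r / ((2 * τ ^ 2) ^ (r + 1 / 2) * Real.Gamma (r + 1 / 2)) *
    Real.exp (-l ^ 2 / (2 * τ ^ 2))

/-!
Completing the square turns `φ(z - λ) j(λ | τ², r)` into a constant multiple of
`(λ²)^r e^{zλ} e^{-cλ²}` with `c = (1 + τ²) / (2τ²)`. Expanding `e^{zλ}` in its power series and
integrating term by term (the series of absolute values sums to `(λ²)^r e^{|z||λ|} e^{-cλ²}`, which
is integrable), the odd moments vanish and the even ones are Gamma integrals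
`Γ(r + k + 1/2) c^{-(r + k + 1/2)}`. The identities `Γ(a + k) = Γ(a) (a)_k` and
`(2k)! = 4^k k! (1/2)_k` turn the resulting series into `₁F₁(r + 1/2, 1/2; z² / (4c))`.
-/

open Set
open scoped Nat

lemma risingFac_succ (a : ℝ) (k : ℕ) : risingFac a (k + 1) = risingFac a k * (a + k) := by
  simp [risingFac, ascPochhammer_succ_eval]

lemma Gamma_add_natCast_eq_mul_risingFac {x : ℝ} (hx : 0 < x) (k : ℕ) :
    Gamma (x + k) = Gamma x * risingFac x k := by
  induction k with
  | zero => simp [risingFac]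
  | succ k ih =>
    rw [Nat.cast_succ, ← add_assoc, Gamma_add_one (by positivity), ih, risingFac_succ]
    ring

lemma risingFac_one_half (k : ℕ) : risingFac (1 / 2) k = (2 * k)! / (4 ^ k * k !) := by
  induction k with
  | zero => simp [risingFac]
  | succ k ih =>
    rw [show 2 * (k + 1) = 2 * k + 1 + 1 by ring, Nat.factorial_succ, Nat.factorial_succ,
      Nat.factorial_succ, risingFac_succ, ih]
    push_cast
    field_simp
    ring

lemma integrable_comp_abs {g : ℝ → ℝ} (hg : IntegrableOn g (Ioi 0)) :
    Integrable fun x => g |x| := by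
  have hIoi : IntegrableOn (fun x => g |x|) (Ioi 0) :=
    hg.congr_fun (fun x hx => by rw [abs_of_pos hx]) measurableSet_Ioi
  rw [← integrableOn_univ, ← Iic_union_Ioi (a := (0 : ℝ)), integrableOn_union]
  refine ⟨?_, hIoi⟩
  rw [← (Measure.measurePreserving_neg volume).integrableOn_comp_preimage
    (Homeomorph.neg ℝ).measurableEmbedding]
  simpa [Function.comp_def, integrableOn_Ici_iff_integrableOn_Ioi] using hIoi

lemma integral_eq_zero_of_odd {f : ℝ → ℝ} (hf : ∀ x, f (-x) = -f x) : ∫ x, f x = 0 := by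
  have h := integral_neg_eq_self f volume
  simp only [hf, integral_neg] at h
  linarith

section GaussianMoments

variable {c s : ℝ}

lemma integrable_sq_rpow_mul_exp_neg_mul_sq (hc : 0 < c) (hs : -1 / 2 < s) :
    Integrable fun x : ℝ => (x ^ 2) ^ s * exp (-c * x ^ 2) := by
  have h := integrable_comp_abs (g := fun x : ℝ => (x ^ 2) ^ s * exp (-c * x ^ 2)) ?_
  · simpa only [sq_abs] using h
  refine (integrableOn_rpow_mul_exp_neg_mul_sq hc (s := 2 * s) (by linarith)).congr_fun
    (fun x hx => ?_) measurableSet_Ioi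
  rw [← rpow_natCast_mul (le_of_lt hx)]
  norm_num

lemma integral_sq_rpow_mul_exp_neg_mul_sq (hc : 0 < c) (hs : -1 / 2 < s) :
    ∫ x : ℝ, (x ^ 2) ^ s * exp (-c * x ^ 2) = Gamma (s + 1 / 2) * c ^ (-(s + 1 / 2)) := by
  have h_abs := integral_comp_abs (f := fun x : ℝ => (x ^ 2) ^ s * exp (-c * x ^ 2))
  simp only [sq_abs] at h_abs
  have h_Ioi : ∫ x in Ioi (0 : ℝ), (x ^ 2) ^ s * exp (-c * x ^ 2) =
      ∫ x in Ioi (0 : ℝ), x ^ (2 * s) * exp (-c * x ^ (2 : ℝ)) :=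
    setIntegral_congr_fun measurableSet_Ioi fun x hx => by
      rw [← rpow_natCast_mul (le_of_lt hx), rpow_two]
      norm_num
  rw [h_abs, h_Ioi, integral_rpow_mul_exp_neg_mul_rpow two_pos (by linarith) hc]
  ring_nf

end GaussianMoments

lemma hasSum_sq_rpow_mul_pow_div_factorial_mul_exp (r c b x : ℝ) :
    HasSum (fun n : ℕ => (x ^ 2) ^ r * ((b * x) ^ n / n !) * exp (-c * x ^ 2))
      ((x ^ 2) ^ r * exp (b * x) * exp (-c * x ^ 2)) := by
  have h := NormedSpace.expSeries_div_hasSum_exp (𝔸 := ℝ) (b * x)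
  rw [← Real.exp_eq_exp_ℝ] at h
  exact (h.mul_left _).mul_right _

lemma integral_sq_rpow_mul_pow_div_factorial_mul_exp_odd (r c b : ℝ) (k : ℕ) :
    ∫ x : ℝ, (x ^ 2) ^ r * ((b * x) ^ (2 * k + 1) / (2 * k + 1)!) * exp (-c * x ^ 2) = 0 :=
  integral_eq_zero_of_odd fun x => by
    rw [mul_neg, Odd.neg_pow (odd_two_mul_add_one k), neg_sq]
    ring

section ExpMomentSeries

variable {r c : ℝ}

lemma integrable_sq_rpow_mul_exp_mul_abs_mul_exp_neg_mul_sq (hc : 0 < c) (hr : -1 / 2 < r)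
    (b : ℝ) : Integrable fun x : ℝ => (x ^ 2) ^ r * exp (b * |x|) * exp (-c * x ^ 2) := by
  refine ((integrable_sq_rpow_mul_exp_neg_mul_sq (half_pos hc) hr).const_mul
    (exp (b ^ 2 / (2 * c)))).mono' (by fun_prop) (ae_of_all _ fun x => ?_)
  have hAMGM : b * |x| ≤ b ^ 2 / (2 * c) + c / 2 * x ^ 2 := by
    rw [← sq_abs x, div_add' _ _ _ (by positivity), le_div_iff₀ (by positivity)]
    nlinarith [sq_nonneg (b - c * |x|)]
  rw [norm_of_nonneg (by positivity)]
  calc (x ^ 2) ^ r * exp (b * |x|) * exp (-c * x ^ 2)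
      = (x ^ 2) ^ r * exp (b * |x| + -c * x ^ 2) := by rw [mul_assoc, ← exp_add]
    _ ≤ (x ^ 2) ^ r * exp (b ^ 2 / (2 * c) + -(c / 2) * x ^ 2) := by
      gcongr _ * exp ?_
      linarith
    _ = exp (b ^ 2 / (2 * c)) * ((x ^ 2) ^ r * exp (-(c / 2) * x ^ 2)) := by
      rw [exp_add]
      ring

lemma integral_sq_rpow_mul_pow_div_factorial_mul_exp_even (hc : 0 < c) (hr : -1 / 2 < r)
    (b : ℝ) (k : ℕ) :
    ∫ x : ℝ, (x ^ 2) ^ r * ((b * x) ^ (2 * k) / (2 * k)!) * exp (-c * x ^ 2) =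
      Gamma (r + 1 / 2) * c ^ (-(r + 1 / 2)) *
        (risingFac (r + 1 / 2) k / risingFac (1 / 2) k * (b ^ 2 / (4 * c)) ^ k / k !) := by
  have hk : (0 : ℝ) ≤ k := k.cast_nonneg
  have hpow : ∀ x : ℝ, (x ^ 2) ^ (r + k) = (x ^ 2) ^ r * (x ^ 2) ^ k := fun x => by
    rcases k.eq_zero_or_pos with rfl | hk_pos
    · simp
    · have : (1 : ℝ) ≤ k := by exact_mod_cast hk_pos
      exact rpow_add_natCast' (sq_nonneg x) (by linarith : 0 < r + k).ne'
  have hterm : ∀ x : ℝ, (x ^ 2) ^ r * ((b * x) ^ (2 * k) / (2 * k)!) * exp (-c * x ^ 2) =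
      b ^ (2 * k) / (2 * k)! * ((x ^ 2) ^ (r + k) * exp (-c * x ^ 2)) := fun x => by
    rw [hpow, mul_pow, pow_mul x]
    ring
  simp_rw [hterm]
  rw [integral_const_mul, integral_sq_rpow_mul_exp_neg_mul_sq hc (by linarith),
    add_right_comm, Gamma_add_natCast_eq_mul_risingFac (by linarith), risingFac_one_half,
    neg_add, rpow_add hc, rpow_neg hc.le (k : ℝ), rpow_natCast, div_pow, mul_pow, pow_mul]
  field_simp

theorem integral_sq_rpow_mul_exp_mul_exp_neg_mul_sq (hc : 0 < c) (hr : -1 / 2 < r) (b : ℝ) :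
    ∫ x : ℝ, (x ^ 2) ^ r * exp (b * x) * exp (-c * x ^ 2) =
      Gamma (r + 1 / 2) * c ^ (-(r + 1 / 2)) * oneF1 (r + 1 / 2) (1 / 2) (b ^ 2 / (4 * c)) := by
  set F : ℕ → ℝ → ℝ := fun n x => (x ^ 2) ^ r * ((b * x) ^ n / n !) * exp (-c * x ^ 2)
  have hnorm : ∀ x, HasSum (fun n => ‖F n x‖)
      ((x ^ 2) ^ r * exp (|b| * |x|) * exp (-c * x ^ 2)) := fun x => by
    convert hasSum_sq_rpow_mul_pow_div_factorial_mul_exp r c |b| |x| using 1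
    · funext n
      rw [norm_mul, norm_mul, norm_div, norm_of_nonneg (by positivity : 0 ≤ (x ^ 2) ^ r), sq_abs]
      simp
    · rw [sq_abs]
  have hsum : HasSum (fun n => ∫ x, F n x)
      (∫ x, (x ^ 2) ^ r * exp (b * x) * exp (-c * x ^ 2)) :=
    hasSum_integral_of_dominated_convergence (fun n x => ‖F n x‖)
      (fun n => (by fun_prop : Measurable (F n)).aestronglyMeasurable)
      (fun n => ae_of_all _ fun x => le_rfl) (ae_of_all _ fun x => (hnorm x).summable)
      ((integrable_sq_rpow_mul_exp_mul_abs_mul_exp_neg_mul_sq hc hr |b|).congr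
        (ae_of_all _ fun x => (hnorm x).tsum_eq.symm))
      (ae_of_all _ fun x => hasSum_sq_rpow_mul_pow_div_factorial_mul_exp r c b x)
  have hsum_even := (Function.Injective.hasSum_iff (mul_right_injective₀ two_ne_zero)
    fun n hn => by
      obtain ⟨k, rfl | rfl⟩ := n.even_or_odd'
      · exact absurd ⟨k, rfl⟩ hn
      · exact integral_sq_rpow_mul_pow_div_factorial_mul_exp_odd r c b k).mpr hsum
  simp only [Function.comp_def, F, integral_sq_rpow_mul_pow_div_factorial_mul_exp_even hc hr]
    at hsum_even
  rw [oneF1, ← tsum_mul_left, hsum_even.tsum_eq]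

end ExpMomentSeries

lemma stdNormalPdf_sub_mul_normalMomentPdf (τ r z x : ℝ) :
    stdNormalPdf (z - x) * normalMomentPdf τ r x =
      stdNormalPdf z / ((2 * τ ^ 2) ^ (r + 1 / 2) * Gamma (r + 1 / 2)) *
        ((x ^ 2) ^ r * exp (z * x) * exp (-(1 / 2 + 1 / (2 * τ ^ 2)) * x ^ 2)) := by
  have hexp : exp (-(z - x) ^ 2 / 2) * exp (-x ^ 2 / (2 * τ ^ 2)) =
      exp (-z ^ 2 / 2) * exp (z * x) * exp (-(1 / 2 + 1 / (2 * τ ^ 2)) * x ^ 2) := by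
    simp only [← exp_add]
    congr 1
    ring
  simp only [stdNormalPdf, normalMomentPdf]
  linear_combination (√(2 * π))⁻¹ * (x ^ 2) ^ r /
    ((2 * τ ^ 2) ^ (r + 1 / 2) * Gamma (r + 1 / 2)) * hexp

/-- Theorem 2.1: two-sided `z` Bayes factor. -/
theorem two_sided_z_bayes_factor (τ r z : ℝ) (hτ : 0 < τ) (hr : 1 ≤ r) :
    ∫ l : ℝ, stdNormalPdf (z - l) * normalMomentPdf τ r l
      = stdNormalPdf z * (1 + τ ^ 2) ^ (-(r + 1 / 2)) *
          oneF1 (r + 1 / 2) (1 / 2) (τ ^ 2 * z ^ 2 / (2 * (1 + τ ^ 2))) := by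
  set c := 1 / 2 + 1 / (2 * τ ^ 2) with hc_def
  have hc : 0 < c := by positivity
  have hscale : 2 * τ ^ 2 * c = 1 + τ ^ 2 := by
    rw [hc_def]
    field_simp
    ring
  have harg : z ^ 2 / (4 * c) = τ ^ 2 * z ^ 2 / (2 * (1 + τ ^ 2)) := by
    rw [← hscale]
    field_simp
    ring
  have hΓ : Gamma (r + 1 / 2) ≠ 0 := (Gamma_pos_of_pos (by linarith)).ne'
  simp_rw [stdNormalPdf_sub_mul_normalMomentPdf]
  rw [integral_const_mul, integral_sq_rpow_mul_exp_mul_exp_neg_mul_sq hc (by linarith) z, harg,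
    ← hscale, mul_rpow (by positivity) hc.le, rpow_neg (by positivity : (0 : ℝ) ≤ 2 * τ ^ 2)]
  field_simp
end

section
/- (Fisher information for r in the gamma family with fixed mode; basis of the Jeffreys prior in equation (15).) Fix k > 0, m > 0 and λ > 0. For r with k/2 + r > 1, define ℓ(r) = log γ(λ; k/2 + r, (k/2 + r − 1)/m), the log of the Gamma density with shape α = k/2 + r and rate (α − 1)/m (so that the mode is at m). Then ℓ is twice differentiable in r, the second derivative does not depend on λ or m, and −ℓ''(r) = ψ₁(k/2 + r) − (k/2 + r − 2)/(k/2 + r − 1)², where ψ₁ denotes the trigamma function (the second derivative of log Γ). -/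
open Real MeasureTheory Filter

/-- Gamma density with shape `α` and rate `b`. -/
noncomputable def gammaPdf (α b lam : ℝ) : ℝ :=
  b ^ α * lam ^ (α - 1) * Real.exp (-b * lam) / Real.Gamma α

/-- Trigamma function: the second derivative of `log Γ` on `(0, ∞)`. -/
noncomputable def trigamma (x : ℝ) : ℝ :=
  deriv (deriv (fun y : ℝ => Real.log (Real.Gamma y))) x

/-!
For `α > 1` the log-density is `α log((α-1)/m) + (α-1) log λ - (α-1)λ/m - log Γ(α)`.
Differentiating in `α` gives the score `log((α-1)/m) + α/(α-1) + log λ - λ/m - ψ(α)`, in which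
`λ` and `m` now enter only through additive constants (`d/dα log((α-1)/m) = 1/(α-1)`), so a second
differentiation gives `1/(α-1) - 1/(α-1)² - ψ₁(α) = (α-2)/(α-1)² - ψ₁(α)`.
The smoothness of `log Γ` on `(0, ∞)` comes from the holomorphy of `Γ` on the right half-plane.
-/

lemma Complex.analyticAt_Gamma_of_re_pos {s : ℂ} (hs : 0 < s.re) : AnalyticAt ℂ Complex.Gamma s := by
  rw [Complex.analyticAt_iff_eventually_differentiableAt]
  filter_upwards [(isOpen_lt continuous_const Complex.continuous_re).mem_nhds hs] with z hz
  exact Complex.differentiableAt_Gamma z fun n hn => by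
    rw [hn, Complex.neg_re, Complex.natCast_re, Left.neg_pos_iff] at hz
    exact hz.not_ge n.cast_nonneg

namespace Real

lemma analyticAt_Gamma {x : ℝ} (hx : 0 < x) : AnalyticAt ℝ Gamma x := by
  refine (Complex.analyticAt_Gamma_of_re_pos (s := x) (by simpa using hx)).re_ofReal.congr ?_
  exact Eventually.of_forall fun y => by simp [Complex.Gamma_ofReal]

lemma analyticAt_log_Gamma {x : ℝ} (hx : 0 < x) : AnalyticAt ℝ (fun y => log (Gamma y)) x :=
  (analyticAt_log (Gamma_pos_of_pos hx)).comp (analyticAt_Gamma hx)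

noncomputable def digamma : ℝ → ℝ := deriv fun y => log (Gamma y)

lemma hasDerivAt_log_Gamma {x : ℝ} (hx : 0 < x) :
    HasDerivAt (fun y => log (Gamma y)) (digamma x) x :=
  (analyticAt_log_Gamma hx).differentiableAt.hasDerivAt

lemma hasDerivAt_digamma {x : ℝ} (hx : 0 < x) : HasDerivAt digamma (trigamma x) x :=
  (analyticAt_log_Gamma hx).deriv.differentiableAt.hasDerivAt

end Real

lemma log_gammaPdf {α b lam : ℝ} (hα : 0 < α) (hb : 0 < b) (hlam : 0 < lam) :
    log (gammaPdf α b lam) = α * log b + (α - 1) * log lam - b * lam - log (Gamma α) := by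
  rw [gammaPdf, log_div (by positivity) (Gamma_pos_of_pos hα).ne', log_mul (by positivity)
    (exp_pos _).ne', log_mul (by positivity) (by positivity), log_rpow hb, log_rpow hlam, log_exp]
  ring

noncomputable def gammaModeScore (m lam α : ℝ) : ℝ :=
  log ((α - 1) / m) + α / (α - 1) + log lam - lam / m - digamma α

lemma hasDerivAt_log_gammaPdf_mode {m lam α : ℝ} (hm : 0 < m) (hlam : 0 < lam) (hα : 1 < α) :
    HasDerivAt (fun a => log (gammaPdf a ((a - 1) / m) lam)) (gammaModeScore m lam α) α := by
  have hα₁ : 0 < α - 1 := sub_pos.mpr hα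
  have h_expand : (fun a => log (gammaPdf a ((a - 1) / m) lam)) =ᶠ[nhds α]
      fun a => a * log ((a - 1) / m) + (a - 1) * log lam - (a - 1) / m * lam - log (Gamma a) := by
    filter_upwards [Ioi_mem_nhds hα] with a (ha : 1 < a)
    exact log_gammaPdf (by linarith) (div_pos (sub_pos.mpr ha) hm) hlam
  have h_shape : HasDerivAt (fun a : ℝ => a - 1) 1 α := (hasDerivAt_id' α).sub_const 1
  have h_rate : HasDerivAt (fun a : ℝ => (a - 1) / m) (1 / m) α := h_shape.div_const m
  have h := ((((hasDerivAt_id' α).mul (h_rate.log (div_pos hα₁ hm).ne')).add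
      (h_shape.mul_const (log lam))).sub (h_rate.mul_const lam)).sub
    (hasDerivAt_log_Gamma (zero_lt_one.trans hα))
  refine (h.congr_of_eventuallyEq h_expand).congr_deriv ?_
  rw [gammaModeScore]
  field_simp

lemma hasDerivAt_gammaModeScore {m lam α : ℝ} (hm : m ≠ 0) (hα : 1 < α) :
    HasDerivAt (gammaModeScore m lam) ((α - 2) / (α - 1) ^ 2 - trigamma α) α := by
  have hα₁ : α - 1 ≠ 0 := (sub_pos.mpr hα).ne'
  have h_shape : HasDerivAt (fun a : ℝ => a - 1) 1 α := (hasDerivAt_id' α).sub_const 1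
  have h := (((((h_shape.div_const m).log (div_ne_zero hα₁ hm)).add
      ((hasDerivAt_id' α).div h_shape hα₁)).add_const (log lam)).sub_const (lam / m)).sub
    (hasDerivAt_digamma (zero_lt_one.trans hα))
  refine h.congr_deriv ?_
  field_simp
  ring

theorem gamma_fisher_information_general (k m lam : ℝ) (hm : 0 < m) (hlam : 0 < lam) :
    ∃ ℓ' ℓ'' : ℝ → ℝ,
      (∀ r : ℝ, 1 < k / 2 + r →
        HasDerivAt (fun s : ℝ => Real.log (gammaPdf (k / 2 + s) ((k / 2 + s - 1) / m) lam))
          (ℓ' r) r) ∧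
      (∀ r : ℝ, 1 < k / 2 + r → HasDerivAt ℓ' (ℓ'' r) r) ∧
      (∀ r : ℝ, 1 < k / 2 + r →
        -ℓ'' r = trigamma (k / 2 + r) - (k / 2 + r - 2) / (k / 2 + r - 1) ^ 2) :=
  ⟨fun r => gammaModeScore m lam (k / 2 + r),
    fun r => (k / 2 + r - 2) / (k / 2 + r - 1) ^ 2 - trigamma (k / 2 + r),
    fun r hr => (hasDerivAt_log_gammaPdf_mode hm hlam hr).comp_const_add (k / 2) r,
    fun r hr => (hasDerivAt_gammaModeScore hm.ne' hr).comp_const_add (k / 2) r,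
    fun r _ => by ring⟩

/-- Fisher information for `r` in the gamma family with fixed mode `m`:
with `ℓ(r) = log γ(λ; k/2 + r, (k/2 + r − 1)/m)`, `ℓ` is twice differentiable on
`{r | k/2 + r > 1}` and `−ℓ''(r) = ψ₁(k/2 + r) − (k/2 + r − 2)/(k/2 + r − 1)²`,
independent of `λ` and `m`. -/
theorem gamma_fisher_information (k m lam : ℝ) (hk : 0 < k) (hm : 0 < m) (hlam : 0 < lam) :
    ∃ ℓ' ℓ'' : ℝ → ℝ,
      (∀ r : ℝ, 1 < k / 2 + r →
        HasDerivAt (fun s : ℝ => Real.log (gammaPdf (k / 2 + s) ((k / 2 + s - 1) / m) lam))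
          (ℓ' r) r) ∧
      (∀ r : ℝ, 1 < k / 2 + r → HasDerivAt ℓ' (ℓ'' r) r) ∧
      (∀ r : ℝ, 1 < k / 2 + r →
        -ℓ'' r = trigamma (k / 2 + r) - (k / 2 + r - 2) / (k / 2 + r - 1) ^ 2) :=
  gamma_fisher_information_general k m lam hm hlam
end
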